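/- Let N be the restriction of the composition w1 ∘ w2 (applying w2 first) to the sublattice ℤα1 + ℤα2 + ℤα3; this restriction is well defined and satisfies N(α1) = 3α1 + 2α2, N(α2) = −2α1 − α2, N(α3) = 6α1 + 2α2 + α3. The map N is unipotent of index 3: (N − id)³ = 0 while (N − id)² ≠ 0; consequently, for every n ≥ 0, Nⁿ = id + n(N − id) + (n(n−1)/2)(N − id)², so the entries of Nⁿ grow quadratically in n. (This corresponds to the fact that the degree of the n-th iterate of the discrete Painlevé equation w1∘w2 grows as O(n²).) -/
import Mathlib


/-- The Picard lattice of the space of initial values of the HV equation: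
the free ℤ-module of rank 16 with basis `H0, H1, E1, …, E14`. -/
abbrev Pic : Type := Fin 16 → ℤ

/-- The class `H0` (total transform of a line `x = const`). -/
def H0 : Pic := Pi.single 0 1

/-- The class `H1` (total transform of a line `y = const`). -/
def H1 : Pic := Pi.single 1 1

/-- The exceptional classes: `E k` is the paper's `E_{k+1}` for `k : Fin 14`. -/
def E (k : Fin 14) : Pic := Pi.single k.succ.succ 1

/-- The intersection form: `H0·H1 = 1`, `H0·H0 = H1·H1 = 0`, `Ek·El = -δ`, `Hi·Ek = 0`. -/
def ip (u v : Pic) : ℤ :=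
  u 0 * v 1 + u 1 * v 0 - ∑ k : Fin 14, u k.succ.succ * v k.succ.succ

/-- The canonical class `K = -2H0 - 2H1 + E1 + ⋯ + E14`. -/
def KX : Pic := (-2 : ℤ) • H0 + (-2 : ℤ) • H1 + ∑ k : Fin 14, E k

/-- The classes `D0, …, D12` of the irreducible components of `-K`. -/
def D : Fin 13 → Pic :=
  ![E 0 - E 1, E 1 - E 2, E 2 - E 3,
    E 4 - E 5, E 5 - E 6, E 6 - E 7,
    E 8 - E 9, E 10 - E 11, E 11 - E 12, E 12 - E 13,
    H0 - E 0 - E 1 - E 8, H1 - E 4 - E 5 - E 8, E 9 - E 10 - E 11]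

/-- The root basis `α1, α2, α3` of the orthogonal complement of the `D`'s. -/
def α : Fin 3 → Pic :=
  ![(2 : ℤ) • H1 - E 0 - E 1 - E 2 - E 3,
    (2 : ℤ) • H0 - E 4 - E 5 - E 6 - E 7,
    (2 : ℤ) • H0 + (2 : ℤ) • H1 - (2 : ℤ) • E 8 - (2 : ℤ) • E 9 - E 10 - E 11 - E 12 - E 13]

/-- The ℤ-linear map sending the `j`-th basis vector to `f j`. -/
def ofImages (f : Fin 16 → Pic) : Pic →ₗ[ℤ] Pic :=
  Matrix.toLin' (Matrix.of fun i j => f j i)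

/-- The generator `w1`. -/
def w1 : Pic →ₗ[ℤ] Pic := ofImages
  ![H0 + (2 : ℤ) • H1 - E 0 - E 1 - E 2 - E 3, H1,
    H1 - E 3, H1 - E 2, H1 - E 1, H1 - E 0,
    E 4, E 5, E 6, E 7, E 8, E 9, E 10, E 11, E 12, E 13]

/-- The generator `w2`. -/
def w2 : Pic →ₗ[ℤ] Pic := ofImages
  ![H0, (2 : ℤ) • H0 + H1 - E 4 - E 5 - E 6 - E 7,
    E 0, E 1, E 2, E 3,
    H0 - E 7, H0 - E 6, H0 - E 5, H0 - E 4,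
    E 8, E 9, E 10, E 11, E 12, E 13]

/-- The generator `w3`. -/
def w3 : Pic →ₗ[ℤ] Pic := ofImages
  ![H0 + α 2, H1 + α 2,
    E 0, E 1, E 2, E 3, E 4, E 5, E 6, E 7,
    E 8 + α 2, E 9 + α 2,
    E 10 + (H0 + H1 - E 8 - E 9 - E 10 - E 13),
    E 11 + (H0 + H1 - E 8 - E 9 - E 11 - E 12),
    E 12 + (H0 + H1 - E 8 - E 9 - E 11 - E 12),
    E 13 + (H0 + H1 - E 8 - E 9 - E 10 - E 13)]

/-- The generator `σ12`. -/
def s12 : Pic →ₗ[ℤ] Pic := ofImages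
  ![H1, H0, E 4, E 5, E 6, E 7, E 0, E 1, E 2, E 3,
    E 8, E 9, E 10, E 11, E 12, E 13]

/-- The generator `σ13`. -/
def s13 : Pic →ₗ[ℤ] Pic := ofImages
  ![H0, H0 + H1 - E 8 - E 9,
    E 10, E 11, E 12, E 13,
    E 4, E 5, E 6, E 7,
    H0 - E 9, H0 - E 8,
    E 0, E 1, E 2, E 3]

/-- The action `φ` of the Hietarinta–Viallet equation on the Picard lattice. -/
def phiHV : Pic →ₗ[ℤ] Pic := ofImages
  ![(3 : ℤ) • H0 + H1 - E 4 - E 5 - E 6 - E 7 - E 8 - E 9, H0,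
    H0 - E 7, H0 - E 6, H0 - E 5, H0 - E 4,
    E 10, E 11, E 12, E 13,
    H0 - E 9, H0 - E 8,
    E 0, E 1, E 2, E 3]

/-- The composition `w1 ∘ w2` (applying `w2` first): a discrete Painlevé equation. -/
def NEnd : Module.End ℤ Pic := w1 ∘ₗ w2

/-- The sublattice `ℤα1 + ℤα2 + ℤα3`. -/
def L : Submodule ℤ Pic := Submodule.span ℤ ({α 0, α 1, α 2} : Set Pic)

private lemma hN0 : NEnd (α 0) = (3 : ℤ) • α 0 + (2 : ℤ) • α 1 := by decide
private lemma hN1 : NEnd (α 1) = -((2 : ℤ) • α 0) - α 1 := by decide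
private lemma hN2 : NEnd (α 2) = (6 : ℤ) • α 0 + (2 : ℤ) • α 1 + α 2 := by decide
private lemma hm3_0 : (((NEnd - 1) ^ 3 : Module.End ℤ Pic)) (α 0) = 0 := by decide
private lemma hm3_1 : (((NEnd - 1) ^ 3 : Module.End ℤ Pic)) (α 1) = 0 := by decide
private lemma hm3_2 : (((NEnd - 1) ^ 3 : Module.End ℤ Pic)) (α 2) = 0 := by decide
private lemma hm2_2 : (((NEnd - 1) ^ 2 : Module.End ℤ Pic)) (α 2) ≠ 0 := by decide

private lemma memα (i : Fin 3) : α i ∈ L := by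
  apply Submodule.subset_span
  fin_cases i <;> simp

private lemma hNmem : ∀ v ∈ L, NEnd v ∈ L := by
  intro v hv
  induction hv using Submodule.span_induction with
  | mem x hx =>
    rcases hx with h | h | h <;> subst h
    · rw [hN0]; exact add_mem (Submodule.smul_mem _ _ (memα 0)) (Submodule.smul_mem _ _ (memα 1))
    · rw [hN1]; exact sub_mem (neg_mem (Submodule.smul_mem _ _ (memα 0))) (memα 1)
    · rw [hN2]
      exact add_mem (add_mem (Submodule.smul_mem _ _ (memα 0)) (Submodule.smul_mem _ _ (memα 1))) (memα 2)
  | zero => simp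
  | add x y _ _ hx hy => rw [map_add]; exact add_mem hx hy
  | smul c x _ hx => rw [map_smul]; exact Submodule.smul_mem _ _ hx

private lemma hMmem : ∀ v ∈ L, ((NEnd - 1 : Module.End ℤ Pic)) v ∈ L := by
  intro v hv
  have : ((NEnd - 1 : Module.End ℤ Pic)) v = NEnd v - v := rfl
  rw [this]
  exact sub_mem (hNmem v hv) hv

private lemma hm3 : ∀ v ∈ L, (((NEnd - 1) ^ 3 : Module.End ℤ Pic)) v = 0 := by
  intro v hv
  induction hv using Submodule.span_induction with
  | mem x hx => rcases hx with h | h | h <;> subst h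
                · exact hm3_0
                · exact hm3_1
                · exact hm3_2
  | zero => simp
  | add x y _ _ hx hy => rw [map_add, hx, hy, add_zero]
  | smul c x _ hx => rw [map_smul, hx, smul_zero]

/-- The restriction of `w1 ∘ w2` to the sublattice `ℤα1 + ℤα2 + ℤα3` is well defined,
sends `α1 ↦ 3α1+2α2`, `α2 ↦ −2α1−α2`, `α3 ↦ 6α1+2α2+α3`, and is unipotent of index 3
there: `(N − id)³ = 0` on the sublattice while `(N − id)² ≠ 0`; consequently
`Nⁿ = id + n(N − id) + (n choose 2)(N − id)²` on the sublattice, so the entries of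
`Nⁿ` grow quadratically in `n` (degree growth `O(n²)`). -/
theorem w1w2_unipotent :
    (∀ v ∈ L, NEnd v ∈ L) ∧
    NEnd (α 0) = (3 : ℤ) • α 0 + (2 : ℤ) • α 1 ∧
    NEnd (α 1) = -((2 : ℤ) • α 0) - α 1 ∧
    NEnd (α 2) = (6 : ℤ) • α 0 + (2 : ℤ) • α 1 + α 2 ∧
    (∀ v ∈ L, (((NEnd - 1) ^ 3 : Module.End ℤ Pic)) v = 0) ∧
    (∃ v ∈ L, (((NEnd - 1) ^ 2 : Module.End ℤ Pic)) v ≠ 0) ∧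
    (∀ n : ℕ, ∀ v ∈ L,
      ((NEnd ^ n : Module.End ℤ Pic)) v = v + (n : ℤ) • (((NEnd - 1 : Module.End ℤ Pic)) v) + (n.choose 2 : ℤ) • ((((NEnd - 1) ^ 2 : Module.End ℤ Pic)) v)) := by
  refine ⟨hNmem, hN0, hN1, hN2, hm3, ⟨α 2, memα 2, hm2_2⟩, ?_⟩
  intro n
  induction n with
  | zero => intro v hv; simp
  | succ n ih =>
    intro v hv
    have hMv : ((NEnd - 1 : Module.End ℤ Pic)) v ∈ L := hMmem v hv
    have hsplit : (NEnd ^ (n+1) : Module.End ℤ Pic) = NEnd ^ n + NEnd ^ n * (NEnd - 1) := by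
      rw [mul_sub, mul_one, ← pow_succ]; abel
    have happ : ((NEnd ^ (n+1) : Module.End ℤ Pic)) v
        = ((NEnd ^ n : Module.End ℤ Pic)) v
          + ((NEnd ^ n : Module.End ℤ Pic)) (((NEnd - 1 : Module.End ℤ Pic)) v) := by
      rw [hsplit]; rfl
    have e2 : ((NEnd - 1 : Module.End ℤ Pic)) (((NEnd - 1 : Module.End ℤ Pic)) v)
        = (((NEnd - 1) ^ 2 : Module.End ℤ Pic)) v := by
      rw [pow_two]; rfl
    have e3 : (((NEnd - 1) ^ 2 : Module.End ℤ Pic)) (((NEnd - 1 : Module.End ℤ Pic)) v)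
        = (((NEnd - 1) ^ 3 : Module.End ℤ Pic)) v := by
      rw [pow_succ]; rfl
    rw [happ, ih v hv, ih _ hMv, e2, e3, hm3 v hv, smul_zero, add_zero]
    have hc : ((n+1).choose 2 : ℤ) = (n : ℤ) + (n.choose 2 : ℤ) := by
      rw [Nat.choose_succ_succ]
      push_cast [Nat.choose_one_right]
      ring
    push_cast [hc]
    rw [add_smul, add_smul, one_smul]
    abel
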